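/- Nonnegativity and rigidity of the Mazur quantity: for two data sets (X₁, Y₁, Λ₁) and (X₂, Y₂, Λ₂) with X₁ > 0 and X₂ > 0, writing Φ₁ := Φ(X₁,Y₁,Λ₁), Φ₂ := Φ(X₂,Y₂,Λ₂) and Ψ := Φ₁ * Φ₂⁻¹ - 1, the trace of Ψ is a real number (its imaginary part vanishes), its real part is nonnegative, and trace(Ψ) = 0 if and only if X₁ = X₂, Y₁ = Y₂ and Λ₁ = Λ₂ (equivalently, if and only if Φ₁ = Φ₂). -/

import Mathlib

open Complex ComplexConjugate Matrix

/-- The `SU(2,1)` metric `η = diag(-1, 1, 1)`. -/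
noncomputable def etaM : Matrix (Fin 3) (Fin 3) ℂ :=
  Matrix.diagonal ![-1, 1, 1]

/-- The vector `v` built from the Ernst potential `ℰ = -X - Λ conj(Λ) + i Y`
and the electromagnetic potential `Λ`:
`v = (2√X)⁻¹ (ℰ - 1, 2Λ, ℰ + 1)`. -/
noncomputable def vE (X Y : ℝ) (Λ : ℂ) : Fin 3 → ℂ :=
  let ℰ : ℂ := -(X : ℂ) - Λ * conj Λ + Complex.I * Y
  ![(ℰ - 1) / (2 * Real.sqrt X), Λ / Real.sqrt X, (ℰ + 1) / (2 * Real.sqrt X)]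

/-- The hermitian matrix `Φ` of the Mazur construction:
`Φ_{ab} = η_{ab} + 2 conj(v_a) v_b`. -/
noncomputable def PhiM (X Y : ℝ) (Λ : ℂ) : Matrix (Fin 3) (Fin 3) ℂ :=
  Matrix.of fun a b => etaM a b + 2 * conj (vE X Y Λ a) * vE X Y Λ b


lemma vmv_mul (w v : Fin 3 → ℂ) (M : Matrix (Fin 3) (Fin 3) ℂ) :
    vecMulVec w v * M = vecMulVec w (v ᵥ* M) := by
  ext i j
  simp [vecMulVec_apply, Matrix.mul_apply, Matrix.vecMul, dotProduct,
    Finset.mul_sum, mul_assoc]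

lemma mul_vmv (w v : Fin 3 → ℂ) (M : Matrix (Fin 3) (Fin 3) ℂ) :
    M * vecMulVec w v = vecMulVec (M *ᵥ w) v := by
  ext i j
  simp [vecMulVec_apply, Matrix.mul_apply, Matrix.mulVec, dotProduct,
    Finset.sum_mul, mul_assoc]

lemma vmv_mul_vmv (w v w' v' : Fin 3 → ℂ) :
    vecMulVec w v * vecMulVec w' v' = (v ⬝ᵥ w') • vecMulVec w v' := by
  ext i j
  simp [vecMulVec_apply, Matrix.mul_apply, dotProduct, Finset.sum_mul,
    Finset.mul_sum]
  ring_nf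
  rw [Fin.sum_univ_three, Fin.sum_univ_three]
  ring

lemma eta_mul_eta : etaM * etaM = 1 := by
  ext i j
  fin_cases i <;> fin_cases j <;>
    simp [etaM, Matrix.mul_apply, Fin.sum_univ_three, Matrix.one_apply]

lemma phiM_eq (X Y : ℝ) (Λ : ℂ) :
    PhiM X Y Λ = etaM + (2 : ℂ) • vecMulVec (star (vE X Y Λ)) (vE X Y Λ) := by
  ext a b
  simp [PhiM, vecMulVec_apply, mul_assoc]

lemma eta_mulVec (w : Fin 3 → ℂ) : etaM *ᵥ (etaM *ᵥ w) = w := by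
  funext i
  fin_cases i <;>
    simp [etaM, Matrix.mulVec, dotProduct, Fin.sum_univ_three]

lemma key_scalar (X Y : ℝ) (Λ : ℂ) (hX : 0 < X) :
    vE X Y Λ ⬝ᵥ (etaM *ᵥ star (vE X Y Λ)) = -1 := by
  have hs : (Real.sqrt X : ℂ) ≠ 0 := by norm_cast; positivity
  have hXs : (X : ℂ) = (Real.sqrt X : ℂ) * (Real.sqrt X : ℂ) := by
    norm_cast; rw [Real.mul_self_sqrt hX.le]
  simp only [vE, etaM, dotProduct, Matrix.mulVec, Fin.sum_univ_three,
    Matrix.diagonal_apply, Pi.star_apply, Matrix.cons_val_zero, Matrix.cons_val_one,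
    Matrix.head_cons, Matrix.cons_val_two, Matrix.tail_cons,
    show ((0:Fin 3) = (1:Fin 3)) = False from by decide,
    show ((0:Fin 3) = (2:Fin 3)) = False from by decide,
    show ((1:Fin 3) = (0:Fin 3)) = False from by decide,
    show ((1:Fin 3) = (2:Fin 3)) = False from by decide,
    show ((2:Fin 3) = (0:Fin 3)) = False from by decide,
    show ((2:Fin 3) = (1:Fin 3)) = False from by decide,
    if_true, if_false, ite_true, ite_false]
  simp only [map_div₀, _root_.map_mul, map_sub, map_add, map_neg, Complex.conj_ofReal,
    Complex.conj_I, _root_.map_one, map_ofNat, Complex.conj_conj, RCLike.star_def]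
  rw [hXs]
  field_simp
  ring_nf

lemma trace_vmv (w z : Fin 3 → ℂ) : (vecMulVec w z).trace = z ⬝ᵥ w := by
  simp [Matrix.trace, vecMulVec_apply, dotProduct, Matrix.diag, mul_comm]

lemma conj_c (X₁ Y₁ X₂ Y₂ : ℝ) (Λ₁ Λ₂ : ℂ) :
    conj (vE X₁ Y₁ Λ₁ ⬝ᵥ (etaM *ᵥ star (vE X₂ Y₂ Λ₂)))
      = vE X₂ Y₂ Λ₂ ⬝ᵥ (etaM *ᵥ star (vE X₁ Y₁ Λ₁)) := by
  simp only [vE, etaM, dotProduct, Matrix.mulVec, Fin.sum_univ_three,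
    Matrix.diagonal_apply, Pi.star_apply, Matrix.cons_val_zero, Matrix.cons_val_one,
    Matrix.head_cons, Matrix.cons_val_two, Matrix.tail_cons,
    show ((0:Fin 3) = (1:Fin 3)) = False from by decide,
    show ((0:Fin 3) = (2:Fin 3)) = False from by decide,
    show ((1:Fin 3) = (0:Fin 3)) = False from by decide,
    show ((1:Fin 3) = (2:Fin 3)) = False from by decide,
    show ((2:Fin 3) = (0:Fin 3)) = False from by decide,
    show ((2:Fin 3) = (1:Fin 3)) = False from by decide,
    if_true, if_false, ite_true, ite_false]
  simp only [map_div₀, _root_.map_mul, map_sub, map_add, map_neg, Complex.conj_ofReal,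
    Complex.conj_I, _root_.map_one, map_ofNat, Complex.conj_conj, RCLike.star_def, map_zero]
  ring

lemma eta_phi_eta (X Y : ℝ) (Λ : ℂ) :
    etaM * PhiM X Y Λ * etaM
      = etaM + (2:ℂ) • vecMulVec (etaM *ᵥ star (vE X Y Λ)) (vE X Y Λ ᵥ* etaM) := by
  rw [phiM_eq]
  rw [Matrix.mul_add, Matrix.add_mul, Matrix.mul_smul, Matrix.smul_mul,
    mul_vmv, vmv_mul, eta_mul_eta, Matrix.one_mul]

lemma trace_key (X₁ Y₁ X₂ Y₂ : ℝ) (Λ₁ Λ₂ : ℂ) (hX₁ : 0 < X₁) (hX₂ : 0 < X₂) :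
    (PhiM X₁ Y₁ Λ₁ * (etaM * PhiM X₂ Y₂ Λ₂ * etaM)).trace
      = -1 + 4 * ((vE X₁ Y₁ Λ₁ ⬝ᵥ (etaM *ᵥ star (vE X₂ Y₂ Λ₂)))
          * conj (vE X₁ Y₁ Λ₁ ⬝ᵥ (etaM *ᵥ star (vE X₂ Y₂ Λ₂)))) := by
  rw [eta_phi_eta, phiM_eq]
  rw [Matrix.add_mul, Matrix.mul_add, Matrix.mul_add, Matrix.mul_smul,
    Matrix.smul_mul, Matrix.smul_mul, Matrix.mul_smul, eta_mul_eta,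
    mul_vmv, vmv_mul, vmv_mul_vmv, eta_mulVec]
  simp only [Matrix.trace_add, Matrix.trace_smul, Matrix.trace_one, trace_vmv,
    smul_smul, smul_eq_mul]
  rw [conj_c]
  have h1 := key_scalar X₁ Y₁ Λ₁ hX₁
  have h2 := key_scalar X₂ Y₂ Λ₂ hX₂
  have hd1 : (vE X₁ Y₁ Λ₁ ᵥ* etaM) ⬝ᵥ star (vE X₁ Y₁ Λ₁) = -1 := by
    rw [← Matrix.dotProduct_mulVec]; exact h1
  have hd2 : (vE X₂ Y₂ Λ₂ ᵥ* etaM) ⬝ᵥ star (vE X₂ Y₂ Λ₂) = -1 := by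
    rw [← Matrix.dotProduct_mulVec]; exact h2
  rw [hd1, hd2]
  simp only [← Matrix.dotProduct_mulVec, Fintype.card_fin, Nat.cast_ofNat]
  ring

lemma c_re_im (X₁ Y₁ X₂ Y₂ : ℝ) (Λ₁ Λ₂ : ℂ) (hX₁ : 0 < X₁) (hX₂ : 0 < X₂) :
    (vE X₁ Y₁ Λ₁ ⬝ᵥ (etaM *ᵥ star (vE X₂ Y₂ Λ₂))).re
        = -(X₁ + X₂ + Complex.normSq (Λ₁ - Λ₂)) / (2 * Real.sqrt X₁ * Real.sqrt X₂) ∧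
      (vE X₁ Y₁ Λ₁ ⬝ᵥ (etaM *ᵥ star (vE X₂ Y₂ Λ₂))).im
        = (Y₁ - Y₂ + 2 * (Λ₁.im * Λ₂.re - Λ₁.re * Λ₂.im))
            / (2 * Real.sqrt X₁ * Real.sqrt X₂) := by
  have hs₁ : Real.sqrt X₁ ≠ 0 := by positivity
  have hs₂ : Real.sqrt X₂ ≠ 0 := by positivity
  have e₁ : X₁ = Real.sqrt X₁ * Real.sqrt X₁ := (Real.mul_self_sqrt hX₁.le).symm
  have e₂ : X₂ = Real.sqrt X₂ * Real.sqrt X₂ := (Real.mul_self_sqrt hX₂.le).symm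
  constructor <;>
  · simp only [vE, etaM, dotProduct, Matrix.mulVec, Fin.sum_univ_three,
      Matrix.diagonal_apply, Pi.star_apply, Matrix.cons_val_zero, Matrix.cons_val_one,
      Matrix.head_cons, Matrix.cons_val_two, Matrix.tail_cons,
      show ((0:Fin 3) = (1:Fin 3)) = False from by decide,
      show ((0:Fin 3) = (2:Fin 3)) = False from by decide,
      show ((1:Fin 3) = (0:Fin 3)) = False from by decide,
      show ((1:Fin 3) = (2:Fin 3)) = False from by decide,
      show ((2:Fin 3) = (0:Fin 3)) = False from by decide,
      show ((2:Fin 3) = (1:Fin 3)) = False from by decide,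
      if_true, if_false, ite_true, ite_false]
    simp only [Complex.add_re, Complex.add_im, Complex.sub_re, Complex.sub_im,
      Complex.neg_re, Complex.neg_im, Complex.mul_re, Complex.mul_im,
      Complex.div_re, Complex.div_im, Complex.normSq_apply, Complex.conj_re,
      Complex.conj_im, Complex.I_re, Complex.I_im, Complex.ofReal_re,
      Complex.ofReal_im, Complex.one_re, Complex.one_im,
      Complex.inv_re, Complex.inv_im, Complex.normSq_mk, Complex.zero_re,
      Complex.zero_im, map_zero, Complex.normSq_apply,
      Complex.re_ofNat, Complex.im_ofNat, Complex.star_def, map_div₀,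
      _root_.map_mul, map_sub, map_add, map_neg, Complex.conj_ofReal,
      Complex.conj_I, _root_.map_one, map_ofNat, Complex.conj_conj]
    set s₁ := Real.sqrt X₁ with hs₁def
    set s₂ := Real.sqrt X₂ with hs₂def
    rw [e₁, e₂]
    field_simp
    ring

set_option maxHeartbeats 1000000 in
lemma phi_mul_inv (X Y : ℝ) (Λ : ℂ) (hX : 0 < X) :
    PhiM X Y Λ * (etaM * PhiM X Y Λ * etaM) = 1 := by
  rw [eta_phi_eta]
  conv_lhs => rw [phiM_eq]
  rw [Matrix.add_mul, Matrix.mul_add, Matrix.mul_add, Matrix.mul_smul,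
    Matrix.smul_mul, Matrix.smul_mul, Matrix.mul_smul, eta_mul_eta,
    mul_vmv, vmv_mul, vmv_mul_vmv, eta_mulVec, key_scalar X Y Λ hX]
  simp only [smul_smul, neg_smul, one_smul, smul_neg]
  module

set_option maxHeartbeats 1000000 in
/-- Nonnegativity and rigidity of the Mazur quantity: with
`Ψ = Φ₁ Φ₂⁻¹ - 1`, the trace of `Ψ` is real and nonnegative, and it vanishes
if and only if the two data sets coincide, equivalently iff `Φ₁ = Φ₂`. -/
theorem PhiM_trace_nonneg_rigidity (X₁ Y₁ X₂ Y₂ : ℝ) (Λ₁ Λ₂ : ℂ)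
    (hX₁ : 0 < X₁) (hX₂ : 0 < X₂) :
    (PhiM X₁ Y₁ Λ₁ * (PhiM X₂ Y₂ Λ₂)⁻¹ - 1).trace.im = 0 ∧
      0 ≤ (PhiM X₁ Y₁ Λ₁ * (PhiM X₂ Y₂ Λ₂)⁻¹ - 1).trace.re ∧
      ((PhiM X₁ Y₁ Λ₁ * (PhiM X₂ Y₂ Λ₂)⁻¹ - 1).trace = 0 ↔
        (X₁ = X₂ ∧ Y₁ = Y₂ ∧ Λ₁ = Λ₂)) ∧
      ((PhiM X₁ Y₁ Λ₁ * (PhiM X₂ Y₂ Λ₂)⁻¹ - 1).trace = 0 ↔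
        PhiM X₁ Y₁ Λ₁ = PhiM X₂ Y₂ Λ₂) := by
  have hinv : (PhiM X₂ Y₂ Λ₂)⁻¹ = etaM * PhiM X₂ Y₂ Λ₂ * etaM :=
    Matrix.inv_eq_right_inv (phi_mul_inv X₂ Y₂ Λ₂ hX₂)
  set c := vE X₁ Y₁ Λ₁ ⬝ᵥ (etaM *ᵥ star (vE X₂ Y₂ Λ₂)) with hc
  have htr : (PhiM X₁ Y₁ Λ₁ * (PhiM X₂ Y₂ Λ₂)⁻¹ - 1).trace
      = ((4 * Complex.normSq c - 4 : ℝ) : ℂ) := by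
    rw [Matrix.trace_sub, Matrix.trace_one, hinv,
      trace_key X₁ Y₁ X₂ Y₂ Λ₁ Λ₂ hX₁ hX₂, ← hc, Complex.mul_conj]
    push_cast [Fintype.card_fin]
    ring
  obtain ⟨hre, him⟩ := c_re_im X₁ Y₁ X₂ Y₂ Λ₁ Λ₂ hX₁ hX₂
  rw [← hc] at hre him
  set D := Complex.normSq (Λ₁ - Λ₂) with hD
  set a := X₁ + X₂ + D with ha
  set b := Y₁ - Y₂ + 2 * (Λ₁.im * Λ₂.re - Λ₁.re * Λ₂.im) with hb
  have hs₁ := Real.sqrt_pos.2 hX₁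
  have hs₂ := Real.sqrt_pos.2 hX₂
  have e₁ : Real.sqrt X₁ * Real.sqrt X₁ = X₁ := Real.mul_self_sqrt hX₁.le
  have e₂ : Real.sqrt X₂ * Real.sqrt X₂ = X₂ := Real.mul_self_sqrt hX₂.le
  have hDnn : 0 ≤ D := Complex.normSq_nonneg _
  have hnormc : Complex.normSq c = (a ^ 2 + b ^ 2) / (4 * (X₁ * X₂)) := by
    have hden : (2*Real.sqrt X₁*Real.sqrt X₂)*(2*Real.sqrt X₁*Real.sqrt X₂) = 4*(X₁*X₂) := by
      linear_combination (4*(Real.sqrt X₂*Real.sqrt X₂))*e₁ + 4*X₁*e₂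
    rw [Complex.normSq_apply, hre, him, div_mul_div_comm, div_mul_div_comm, ← add_div, hden]
    ring
  have hkey : 4 * Complex.normSq c - 4
      = ((X₁ - X₂) ^ 2 + 2 * (X₁ + X₂) * D + D ^ 2 + b ^ 2) / (X₁ * X₂) := by
    rw [hnormc, ha]
    field_simp
    ring
  have hnum_nn : 0 ≤ (X₁ - X₂) ^ 2 + 2 * (X₁ + X₂) * D + D ^ 2 + b ^ 2 := by
    nlinarith [sq_nonneg (X₁ - X₂), sq_nonneg D, sq_nonneg b]
  have hXX : 0 < X₁ * X₂ := mul_pos hX₁ hX₂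
  have hiff : (PhiM X₁ Y₁ Λ₁ * (PhiM X₂ Y₂ Λ₂)⁻¹ - 1).trace = 0 ↔
      (X₁ = X₂ ∧ Y₁ = Y₂ ∧ Λ₁ = Λ₂) := by
    rw [htr, show ((4 * Complex.normSq c - 4 : ℝ) : ℂ) = ((4 * Complex.normSq c - 4 : ℝ) : ℂ) from rfl]
    rw [Complex.ofReal_eq_zero, hkey, div_eq_zero_iff]
    constructor
    · rintro (h | h)
      · have h1 : X₁ = X₂ := by nlinarith
        have h2 : D = 0 := by nlinarith
        have h3 : Λ₁ = Λ₂ := by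
          have := Complex.normSq_eq_zero.mp (hD ▸ h2)
          exact sub_eq_zero.mp this
        have h4 : b = 0 := by nlinarith
        refine ⟨h1, ?_, h3⟩
        rw [hb, h3] at h4
        linarith [h4]
      · exact absurd h (ne_of_gt hXX)
    · rintro ⟨h1, h2, h3⟩
      left
      have hD0 : D = 0 := by rw [hD, h3]; simp
      rw [hD0, hb, h1, h2, h3]
      ring
  refine ⟨?_, ?_, hiff, ?_⟩
  · rw [htr]; exact Complex.ofReal_im _
  · rw [htr, Complex.ofReal_re, hkey]
    positivity
  · constructor
    · intro h
      obtain ⟨h1, h2, h3⟩ := hiff.mp h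
      rw [h1, h2, h3]
    · intro h
      rw [h, show PhiM X₂ Y₂ Λ₂ * (PhiM X₂ Y₂ Λ₂)⁻¹ = 1 from by
        rw [hinv]; exact phi_mul_inv X₂ Y₂ Λ₂ hX₂]
      simp
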